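/- arXiv:math/0103137 — 2 statements merged into one kernel-verified Lean document; each statement's English description precedes it below -/
import Mathlib

section
/- Assume that B(d,d) is even for every d ∈ M, where M ⊆ K is a submodule. Then the map d ↦ T_d is an injective group homomorphism from the additive group (M, +) into the group of isometries of (L, B). In particular, the monodromy transformations {T_d : d ∈ M} generate a subgroup of O(L, B) isomorphic to the free abelian group M. (This is Dolgachev's description of the group generated by the monodromy transformations in the boundary components meeting at the complex cusp.) -/
/-- `L = ℤf ⊕ ℤf' ⊕ K`; an element `(a, b, m)` stands for `a·f + b·f' + m`. -/
abbrev Lmod (K : Type*) := ℤ × ℤ × K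

/-- The bilinear form on `L = ℤf ⊕ ℤf' ⊕ K` determined by `B f f = B f' f' = 0`,
`B f f' = 1`, `B f m = B f' m = 0` for `m ∈ K`, and `B` restricted to `K` the
given form `Bk`. -/
def Bform {K : Type*} [AddCommGroup K] (Bk : K →ₗ[ℤ] K →ₗ[ℤ] ℤ)
    (x y : Lmod K) : ℤ :=
  x.1 * y.2.1 + y.1 * x.2.1 + Bk x.2.2 y.2.2

/-- The Dolgachev monodromy transformation `T_d : L → L` for `d ∈ K` (with `Bk d d`
even), the ℤ-linear map determined by `T_d f = f`,
`T_d f' = f' + d - (B(d,d)/2)·f` and `T_d m = m - B(d,m)·f` for `m ∈ K`. -/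
def Td {K : Type*} [AddCommGroup K] (Bk : K →ₗ[ℤ] K →ₗ[ℤ] ℤ) (d : K) :
    Lmod K → Lmod K :=
  fun x => (x.1 - x.2.1 * (Bk d d / 2) - Bk d x.2.2, x.2.1, x.2.2 + x.2.1 • d)

lemma Td_div {K : Type*} [AddCommGroup K] (Bk : K →ₗ[ℤ] K →ₗ[ℤ] ℤ) {d : K} {q : ℤ}
    (hq : Bk d d = 2 * q) : Bk d d / 2 = q := by
  rw [hq]; exact Int.mul_ediv_cancel_left q two_ne_zero

lemma Td_comp {K : Type*} [AddCommGroup K] (Bk : K →ₗ[ℤ] K →ₗ[ℤ] ℤ)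
    (hsym : ∀ a b : K, Bk a b = Bk b a) {a b : K} {qa qb : ℤ}
    (ha : Bk a a = 2 * qa) (hb : Bk b b = 2 * qb) (x : Lmod K) :
    Td Bk a (Td Bk b x) = Td Bk (a + b) x := by
  have hab : Bk (a + b) (a + b) = 2 * (qa + qb + Bk a b) := by
    simp only [map_add, LinearMap.add_apply]
    rw [hsym b a, ha, hb]; ring
  refine Prod.ext ?_ (Prod.ext rfl ?_)
  · simp only [Td]
    rw [Td_div Bk hab, Td_div Bk ha, Td_div Bk hb]
    simp only [map_add, LinearMap.add_apply, map_smul, smul_eq_mul]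
    ring
  · simp only [Td, smul_add]
    abel

/-- `T_d` as a linear equivalence of `L`, given that `Bk d d = 2q` is even. -/
def TdEquiv {K : Type*} [AddCommGroup K] (Bk : K →ₗ[ℤ] K →ₗ[ℤ] ℤ)
    (hsym : ∀ a b : K, Bk a b = Bk b a) (d : K) (q : ℤ)
    (hq : Bk d d = 2 * q) : Lmod K ≃ₗ[ℤ] Lmod K where
  toFun := Td Bk d
  invFun := Td Bk (-d)
  map_add' x y := by
    refine Prod.ext ?_ (Prod.ext rfl ?_)
    · simp only [Td, Prod.fst_add, Prod.snd_add, map_add]; ring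
    · simp only [Td, Prod.snd_add, Prod.fst_add, add_smul]; abel
  map_smul' c x := by
    refine Prod.ext ?_ (Prod.ext rfl ?_)
    · simp only [Td, Prod.smul_fst, Prod.smul_snd, map_smul, smul_eq_mul,
        RingHom.id_apply]; ring
    · simp only [Td, Prod.smul_snd, Prod.smul_fst, smul_eq_mul, mul_smul, smul_add,
        RingHom.id_apply]
  left_inv x := by
    have h2 : Bk (-d) (-d) = 2 * q := by simpa using hq
    show Td Bk (-d) (Td Bk d x) = x
    rw [Td_comp Bk hsym h2 hq, neg_add_cancel]
    refine Prod.ext ?_ (Prod.ext rfl ?_) <;> simp [Td]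
  right_inv x := by
    have h2 : Bk (-d) (-d) = 2 * q := by simpa using hq
    show Td Bk d (Td Bk (-d) x) = x
    rw [Td_comp Bk hsym hq h2, add_neg_cancel]
    refine Prod.ext ?_ (Prod.ext rfl ?_) <;> simp [Td]

/-!
STATEMENT 6: If `B d d` is even for every `d` in a submodule `M ⊆ K`, then `d ↦ T_d`
is an injective group homomorphism from the additive group `(M, +)` into the group
of isometries of `(L, B)`; in particular the monodromy transformations `{T_d : d ∈ M}`
generate a subgroup of `O(L, B)` isomorphic to the free abelian group `M`.
-/
theorem Td_injective_hom
    (K : Type*) [AddCommGroup K] [Module.Free ℤ K] [Module.Finite ℤ K]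
    (Bk : K →ₗ[ℤ] K →ₗ[ℤ] ℤ) (hsym : ∀ a b : K, Bk a b = Bk b a)
    (M : Submodule ℤ K) (heven : ∀ d ∈ M, Even (Bk d d)) :
    ∃ Φ : M →+ Additive (Lmod K ≃ₗ[ℤ] Lmod K),
      Function.Injective Φ ∧
      (∀ d : M, ∀ x : Lmod K, Additive.toMul (Φ d) x = Td Bk (d : K) x) ∧
      (∀ d : M, ∀ x y : Lmod K,
        Bform Bk (Additive.toMul (Φ d) x) (Additive.toMul (Φ d) y) = Bform Bk x y) := by
  have hq : ∀ d : M, Bk d d = 2 * ((heven d d.2).choose) := by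
    intro d
    have := (heven d d.2).choose_spec
    omega
  refine ⟨AddMonoidHom.mk' (fun d => Additive.ofMul (TdEquiv Bk hsym (d : K) _ (hq d))) ?_,
    ?_, fun d x => rfl, ?_⟩
  · intro a b
    apply Additive.toMul.injective
    apply LinearEquiv.toLinearMap_injective
    apply LinearMap.ext
    intro x
    show Td Bk ((a : K) + b) x = Td Bk (a : K) (Td Bk (b : K) x)
    exact (Td_comp Bk hsym (hq a) (hq b) x).symm
  · intro a b hab
    have h : Td Bk (a : K) (0, 1, 0) = Td Bk (b : K) (0, 1, 0) :=
      congrArg (fun e => (Additive.toMul e : Lmod K ≃ₗ[ℤ] Lmod K) (0, 1, 0)) hab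
    have h3 := congrArg (fun z : Lmod K => z.2.2) h
    simp only [Td, zero_add, one_smul] at h3
    exact Subtype.ext h3
  · intro d x y
    have hd := Td_div Bk (hq d)
    have h3 := hq d
    show Bform Bk (Td Bk (d:K) x) (Td Bk (d:K) y) = Bform Bk x y
    simp only [Bform, Td, map_add, map_smul, smul_eq_mul, LinearMap.add_apply,
      LinearMap.smul_apply, hd]
    have h1 := hsym (d:K) x.2.2
    linear_combination x.2.1 * y.2.1 * h3 - y.2.1 * h1
end

section
/- Let d ∈ K with B(d,d) even. Extend T_d to the ℤ-linear map T̃_d : L̃ → L̃ acting as T_d on L and as the identity on h₀ and h₄. Define E_d : L̃ → L̃ to be the ℤ-linear map determined by E_d(h₀) = h₀ + d + (B(d,d)/2)·h₄, E_d(h₄) = h₄, and E_d(x) = x + B(d,x)·h₄ for x ∈ L. Then mir ∘ T̃_d ∘ mir = E_d. (E_d is the Mukai-lattice action of tensoring by a line bundle with first Chern class d, i.e. cup product with exp(d); so this identity expresses that the monodromy transformation T_d is mirrored by tensoring by the line bundle O(d).) -/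
/-- The Mukai lattice `L̃ = ℤh₀ ⊕ ℤh₄ ⊕ L`; an element `(p, q, x)` stands for
`p·h₀ + q·h₄ + x`. -/
abbrev Lt (K : Type*) := ℤ × ℤ × Lmod K

/-- The mirror map `mir : L̃ → L̃`, the ℤ-linear map determined by `mir h₀ = f'`,
`mir h₄ = -f`, `mir f = -h₄`, `mir f' = h₀` and `mir m = m` for `m ∈ K`. -/
def mir {K : Type*} [AddCommGroup K] : Lt K → Lt K :=
  fun u => (u.2.2.2.1, -u.2.2.1, -u.2.1, u.1, u.2.2.2.2)

/-- The extension `T̃_d : L̃ → L̃` of `T_d`, acting as `T_d` on `L` and as the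
identity on `h₀` and `h₄`. -/
def Ttilde {K : Type*} [AddCommGroup K] (Bk : K →ₗ[ℤ] K →ₗ[ℤ] ℤ) (d : K) :
    Lt K → Lt K :=
  fun u => (u.1, u.2.1, Td Bk d u.2.2)

/-- The ℤ-linear map `E_d : L̃ → L̃` determined by
`E_d h₀ = h₀ + d + (B(d,d)/2)·h₄`, `E_d h₄ = h₄`, and `E_d x = x + B(d,x)·h₄`
for `x ∈ L` (cohomology action of tensoring by a line bundle with `c₁ = d`). -/
def Ed {K : Type*} [AddCommGroup K] (Bk : K →ₗ[ℤ] K →ₗ[ℤ] ℤ) (d : K) :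
    Lt K → Lt K :=
  fun u => (u.1, u.2.1 + u.1 * (Bk d d / 2) + Bk d u.2.2.2.2, u.2.2 + u.1 • ((0, 0, d) : Lmod K))

/-!
STATEMENT 7: For `d ∈ K` with `B d d` even, `mir ∘ T̃_d ∘ mir = E_d`: the monodromy
transformation `T_d` is mirrored by tensoring by the line bundle `O(d)`.
-/
theorem mir_Ttilde_mir_eq_Ed
    (K : Type*) [AddCommGroup K] [Module.Free ℤ K] [Module.Finite ℤ K]
    (Bk : K →ₗ[ℤ] K →ₗ[ℤ] ℤ) (hsym : ∀ a b : K, Bk a b = Bk b a)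
    (d : K) (heven : Even (Bk d d)) :
    mir ∘ Ttilde Bk d ∘ mir = Ed Bk d := by
  funext u
  simp [mir, Ttilde, Td, Ed, Prod.ext_iff]
  ring
end
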